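/- Let Σₙ be a symmetric positive-definite real n×n matrix, k ∈ ℝ^n, and κ² ∈ ℝ such that the symmetric (n+1)×(n+1) block matrix [[Σₙ, k],[kᵀ, κ²]] is positive semidefinite. Let β ≥ 0, define γ² := κ² - kᵀ Σₙ⁻¹ k, and assume β² + γ² > 0. Let Σ₊ := [[Σₙ, k],[kᵀ, κ² + β²]] and let k₊ ∈ ℝ^{n+1} have first n entries equal to those of k and last entry κ². Then Σ₊ is invertible, γ² ≥ 0, the model-based squared error β̈² := κ² - k₊ᵀ Σ₊⁻¹ k₊ is nonnegative, and √(β̈²) ≤ β, with equality if and only if β = 0. -/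

import Mathlib

/-!
Everything is a Schur complement of `Σₙ`. In `[[Σₙ, k], [kᵀ, κ²]]` it is `γ²`, nonnegative by
positive semidefiniteness; in `Σ₊` it is `γ² + β² > 0`, so `Σ₊` is invertible. The system
`Σ₊ v = k₊` is solved by `v = ((1 - t) Σₙ⁻¹ k, t)` with `t = γ² / (γ² + β²)`, whence
`k₊ᵀ Σ₊⁻¹ k₊ = kᵀ Σₙ⁻¹ k + γ⁴ / (γ² + β²)` and `β̈² = β² γ² / (β² + γ²)`,
which is `< β²` unless `β = 0`.
-/

open Matrix

namespace Matrix

variable {m ι R : Type*} [CommRing R]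

theorem replicateCol_mulVec_const [Fintype ι] [Unique ι] (v : m → R) (c : R) :
    replicateCol ι v *ᵥ (fun _ => c) = c • v := by
  ext i
  simp [mulVec, dotProduct, mul_comm]

variable [Fintype m]

theorem replicateRow_mul_mul_replicateCol (v w : m → R) (M : Matrix m m R) :
    replicateRow ι v * M * replicateCol ι w = of fun _ _ => v ⬝ᵥ M *ᵥ w := by
  rw [Matrix.mul_assoc, ← replicateCol_mulVec, replicateRow_mul_replicateCol]

variable [DecidableEq m]

theorem isUnit_det_fromBlocks_replicate_iff (A : Matrix m m R) [Invertible A] (k : m → R)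
    (d : R) :
    IsUnit (fromBlocks A (replicateCol (Fin 1) k) (replicateRow (Fin 1) k) !![d]).det ↔
      IsUnit (d - k ⬝ᵥ A⁻¹ *ᵥ k) := by
  rw [← isUnit_iff_isUnit_det, isUnit_fromBlocks_iff_of_invertible₁₁, invOf_eq_nonsing_inv,
    replicateRow_mul_mul_replicateCol, isUnit_iff_isUnit_det]
  simp

theorem sumElim_dotProduct_inv_fromBlocks_replicate_mulVec {K : Type*} [Field K]
    (A : Matrix m m K) [Invertible A] (k : m → K) (d y : K)
    (hd : d - k ⬝ᵥ A⁻¹ *ᵥ k ≠ 0) :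
    Sum.elim k (fun _ => y) ⬝ᵥ
        (fromBlocks A (replicateCol (Fin 1) k) (replicateRow (Fin 1) k) !![d])⁻¹ *ᵥ
          Sum.elim k (fun _ => y) =
      k ⬝ᵥ A⁻¹ *ᵥ k + (y - k ⬝ᵥ A⁻¹ *ᵥ k) ^ 2 / (d - k ⬝ᵥ A⁻¹ *ᵥ k) := by
  have : Invertible (fromBlocks A (replicateCol (Fin 1) k) (replicateRow (Fin 1) k) !![d]) :=
    ((isUnit_iff_isUnit_det _).2
      ((isUnit_det_fromBlocks_replicate_iff A k d).2 hd.isUnit)).invertible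
  set s := k ⬝ᵥ A⁻¹ *ᵥ k with hs
  obtain ⟨t, ht⟩ : ∃ t, t = (y - s) / (d - s) := ⟨_, rfl⟩
  have hsolve : Sum.elim k (fun _ => y) =
      fromBlocks A (replicateCol (Fin 1) k) (replicateRow (Fin 1) k) !![d] *ᵥ
        Sum.elim ((1 - t) • (A⁻¹ *ᵥ k)) (fun _ => t) := by
    rw [fromBlocks_mulVec, Sum.elim_comp_inl, Sum.elim_comp_inr]
    congr 1
    · rw [mulVec_smul, mulVec_mulVec, mul_inv_of_invertible, one_mulVec,
        replicateCol_mulVec_const, ← add_smul, sub_add_cancel, one_smul]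
    · ext j
      simp only [replicateRow_mulVec_eq_const, dotProduct_smul, ← hs, smul_eq_mul, cons_mulVec,
        cons_dotProduct, dotProduct_of_isEmpty, empty_mulVec, Pi.add_apply, Function.const_apply,
        head_fin_const, add_zero, cons_val_fin_one, ht]
      field_simp
      ring
  rw [inv_mulVec_eq_vec hsolve, sumElim_dotProduct_sumElim, dotProduct_smul, ← hs]
  simp only [dotProduct, Fin.sum_univ_one, smul_eq_mul, ht]
  field_simp
  ring

end Matrix

theorem Matrix.PosDef.dotProduct_inv_mulVec_le {m : Type*} [Fintype m] [DecidableEq m]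
    {A : Matrix m m ℝ} (hA : A.PosDef) {k : m → ℝ} {d : ℝ}
    (h : (fromBlocks A (replicateCol (Fin 1) k) (replicateRow (Fin 1) k) !![d]).PosSemidef) :
    k ⬝ᵥ A⁻¹ *ᵥ k ≤ d := by
  have : Invertible A := hA.isUnit.invertible
  have hschur := (hA.fromBlocks₁₁ (replicateCol (Fin 1) k) !![d]).1 (by simpa using h)
  simpa [replicateRow_mul_mul_replicateCol] using hschur.diag_nonneg (i := 0)

theorem Real.sqrt_sq_mul_div_sq_add_le {b g : ℝ} (hb : 0 ≤ b) (hg : 0 ≤ g) :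
    √(b ^ 2 * g / (b ^ 2 + g)) ≤ b := by
  refine Real.sqrt_le_iff.2 ⟨hb, div_le_of_le_mul₀ (by positivity) (by positivity) ?_⟩
  exact mul_le_mul_of_nonneg_left (le_add_of_nonneg_left (sq_nonneg b)) (sq_nonneg b)

theorem Real.sqrt_sq_mul_div_sq_add_eq_iff {b g : ℝ} (hb : 0 ≤ b) (hg : 0 ≤ g) :
    √(b ^ 2 * g / (b ^ 2 + g)) = b ↔ b = 0 := by
  refine ⟨fun h => ?_, fun h => by simp [h]⟩
  by_contra hb0
  have hbpos : 0 < b := lt_of_le_of_ne hb (Ne.symm hb0)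
  have hlt : b ^ 2 * g / (b ^ 2 + g) < b ^ 2 :=
    (div_lt_iff₀ (by positivity)).2 (by nlinarith [pow_pos hbpos 4])
  exact ((Real.sqrt_lt' hbpos).2 hlt).ne h

theorem improved_error_never_larger (n : ℕ) (Sn : Matrix (Fin n) (Fin n) ℝ)
    (hSn : Sn.PosDef)
    (k : Fin n → ℝ) (κ2 : ℝ)
    (hpsd : (Matrix.fromBlocks Sn (Matrix.replicateCol (Fin 1) k)
      (Matrix.replicateRow (Fin 1) k) !![κ2]).PosSemidef)
    (β : ℝ) (hβ : 0 ≤ β)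
    (hpos : 0 < β ^ 2 + (κ2 - k ⬝ᵥ Sn⁻¹ *ᵥ k)) :
    IsUnit (Matrix.fromBlocks Sn (Matrix.replicateCol (Fin 1) k)
      (Matrix.replicateRow (Fin 1) k) !![κ2 + β ^ 2]).det ∧
    0 ≤ κ2 - k ⬝ᵥ Sn⁻¹ *ᵥ k ∧
    0 ≤ κ2 - (Sum.elim k fun _ => κ2) ⬝ᵥ
        (Matrix.fromBlocks Sn (Matrix.replicateCol (Fin 1) k)
          (Matrix.replicateRow (Fin 1) k) !![κ2 + β ^ 2])⁻¹ *ᵥ (Sum.elim k fun _ => κ2) ∧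
    Real.sqrt (κ2 - (Sum.elim k fun _ => κ2) ⬝ᵥ
        (Matrix.fromBlocks Sn (Matrix.replicateCol (Fin 1) k)
          (Matrix.replicateRow (Fin 1) k) !![κ2 + β ^ 2])⁻¹ *ᵥ (Sum.elim k fun _ => κ2)) ≤ β ∧
    (Real.sqrt (κ2 - (Sum.elim k fun _ => κ2) ⬝ᵥ
        (Matrix.fromBlocks Sn (Matrix.replicateCol (Fin 1) k)
          (Matrix.replicateRow (Fin 1) k) !![κ2 + β ^ 2])⁻¹ *ᵥ (Sum.elim k fun _ => κ2)) = β ↔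
      β = 0) := by
  have : Invertible Sn := hSn.isUnit.invertible
  set s := k ⬝ᵥ Sn⁻¹ *ᵥ k
  have hγ : 0 ≤ κ2 - s := sub_nonneg.2 (hSn.dotProduct_inv_mulVec_le hpsd)
  have hd : κ2 + β ^ 2 - s ≠ 0 := by linarith
  have hval : κ2 - (s + (κ2 - s) ^ 2 / (κ2 + β ^ 2 - s)) =
      β ^ 2 * (κ2 - s) / (β ^ 2 + (κ2 - s)) := by
    field_simp
    ring
  rw [sumElim_dotProduct_inv_fromBlocks_replicate_mulVec Sn k _ _ hd, hval]
  exact ⟨(isUnit_det_fromBlocks_replicate_iff Sn k _).2 hd.isUnit, hγ, by positivity,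
    Real.sqrt_sq_mul_div_sq_add_le hβ hγ, Real.sqrt_sq_mul_div_sq_add_eq_iff hβ hγ⟩
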